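/- arXiv:1611.08490 — 4 statements merged into one kernel-verified Lean document; each statement's English description precedes it below -/
import Mathlib

section
/- The ring A_r is a Banach ring: for all f, g ∈ A_r, the product fg (computed in ℂ((t))) again lies in A_r and satisfies ‖fg‖_{hyb,r} ≤ ‖f‖_{hyb,r} · ‖g‖_{hyb,r}; moreover A_r is complete with respect to the metric d(f,g) = ‖f − g‖_{hyb,r}. -/
/-!
The hybrid absolute value is subadditive, submultiplicative, and takes no value in `(0, 1)`.
The first two properties bound every coefficient of `f * g` by a finite part of the Cauchy
product of the series defining `‖f‖_{hyb,r}` and `‖g‖_{hyb,r}`, which gives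
submultiplicativity. The gap in the values makes convergence coefficientwise discrete:
`‖h‖_{hyb,r} < rⁿ` forces the `n`-th coefficient of `h` to vanish. So along a Cauchy sequence
every coefficient is eventually constant, and since `rⁿ ≥ 1` for `n ≤ 0`, all coefficients of
nonpositive index stabilise at the same time; hence the coefficientwise limit is a Laurent
series, and bounding its finite partial sums by those of the sequence gives convergence in norm.
-/

/-- The hybrid norm on `ℂ`: `|c|_hyb = max {1, |c|}` for `c ≠ 0`, and `|0|_hyb = 0`. -/
noncomputable def hybNorm (c : ℂ) : ℝ := if c = 0 then 0 else max 1 ‖c‖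

/-- The ring `A_r` of formal Laurent series `f = ∑ aₙ tⁿ` with
`∑ |aₙ|_hyb rⁿ < ∞`, viewed as a subset of `ℂ((t))`. -/
def Ar (r : ℝ) : Set (LaurentSeries ℂ) :=
  {f | Summable fun n : ℤ => hybNorm (f.coeff n) * r ^ n}

/-- The hybrid norm `‖f‖_{hyb,r} = ∑ |aₙ|_hyb rⁿ` of a Laurent series. -/
noncomputable def hybnorm (r : ℝ) (f : LaurentSeries ℂ) : ℝ :=
  ∑' n : ℤ, hybNorm (f.coeff n) * r ^ n

open Filter Finset

section hybNorm

@[simp] lemma hybNorm_zero : hybNorm 0 = 0 := if_pos rfl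

lemma hybNorm_of_ne_zero {c : ℂ} (hc : c ≠ 0) : hybNorm c = max 1 ‖c‖ := if_neg hc

lemma one_le_hybNorm {c : ℂ} (hc : c ≠ 0) : 1 ≤ hybNorm c := by
  rw [hybNorm_of_ne_zero hc]
  exact le_max_left _ _

lemma hybNorm_nonneg (c : ℂ) : 0 ≤ hybNorm c := by
  by_cases hc : c = 0
  · simp [hc]
  · exact zero_le_one.trans (one_le_hybNorm hc)

lemma norm_le_hybNorm (c : ℂ) : ‖c‖ ≤ hybNorm c := by
  by_cases hc : c = 0
  · simp [hc]
  · rw [hybNorm_of_ne_zero hc]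
    exact le_max_right _ _

lemma eq_zero_of_hybNorm_lt_one {c : ℂ} (h : hybNorm c < 1) : c = 0 := by
  by_contra hc
  exact (one_le_hybNorm hc).not_gt h

lemma hybNorm_add_le (a b : ℂ) : hybNorm (a + b) ≤ hybNorm a + hybNorm b := by
  by_cases hab : a + b = 0
  · simp [hab, add_nonneg, hybNorm_nonneg]
  have one_le : 1 ≤ hybNorm a + hybNorm b := by
    by_cases ha : a = 0
    · simpa [ha] using one_le_hybNorm (c := b) (by simpa [ha] using hab)
    · linarith [one_le_hybNorm ha, hybNorm_nonneg b]
  rw [hybNorm_of_ne_zero hab]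
  exact max_le one_le <|
    (norm_add_le a b).trans (add_le_add (norm_le_hybNorm a) (norm_le_hybNorm b))

lemma hybNorm_sub_le (a b : ℂ) : hybNorm (a - b) ≤ hybNorm a + hybNorm b := by
  have hneg : hybNorm (-b) = hybNorm b := by simp [hybNorm]
  simpa [sub_eq_add_neg, hneg] using hybNorm_add_le a (-b)

lemma hybNorm_mul_le (a b : ℂ) : hybNorm (a * b) ≤ hybNorm a * hybNorm b := by
  by_cases ha : a = 0
  · simp [ha]
  by_cases hb : b = 0
  · simp [hb]
  rw [hybNorm_of_ne_zero ha, hybNorm_of_ne_zero hb, hybNorm_of_ne_zero (mul_ne_zero ha hb),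
    norm_mul]
  exact max_le (one_le_mul_of_one_le_of_one_le (le_max_left _ _) (le_max_left _ _))
    (mul_le_mul (le_max_right _ _) (le_max_right _ _) (norm_nonneg b)
      (zero_le_one.trans (le_max_left _ _)))

lemma hybNorm_sum_le {ι : Type*} (s : Finset ι) (f : ι → ℂ) :
    hybNorm (∑ i ∈ s, f i) ≤ ∑ i ∈ s, hybNorm (f i) :=
  s.le_sum_of_subadditive hybNorm hybNorm_zero.le hybNorm_add_le f

end hybNorm

section Ar

variable {r : ℝ} {f g : LaurentSeries ℂ}

lemma hybTerm_nonneg (hr0 : 0 < r) (f : LaurentSeries ℂ) (n : ℤ) :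
    0 ≤ hybNorm (f.coeff n) * r ^ n :=
  mul_nonneg (hybNorm_nonneg _) (zpow_pos hr0 n).le

lemma hybnorm_nonneg (hr0 : 0 < r) (f : LaurentSeries ℂ) : 0 ≤ hybnorm r f :=
  tsum_nonneg (hybTerm_nonneg hr0 f)

lemma hybTerm_le_hybnorm (hr0 : 0 < r) (hf : f ∈ Ar r) (n : ℤ) :
    hybNorm (f.coeff n) * r ^ n ≤ hybnorm r f :=
  Summable.le_tsum hf n fun m _ => hybTerm_nonneg hr0 f m

lemma mem_Ar_and_hybnorm_le_of_sum_le (hr0 : 0 < r) {C : ℝ}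
    (h : ∀ S : Finset ℤ, ∑ n ∈ S, hybNorm (f.coeff n) * r ^ n ≤ C) :
    f ∈ Ar r ∧ hybnorm r f ≤ C :=
  have hf : f ∈ Ar r := summable_of_sum_le (hybTerm_nonneg hr0 f) h
  ⟨hf, Summable.tsum_le_of_sum_le hf h⟩

lemma sub_mem_Ar (hr0 : 0 < r) (hf : f ∈ Ar r) (hg : g ∈ Ar r) : f - g ∈ Ar r := by
  refine Summable.of_nonneg_of_le (hybTerm_nonneg hr0 _) (fun n => ?_) (hf.add hg)
  rw [HahnSeries.coeff_sub, ← add_mul]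
  exact mul_le_mul_of_nonneg_right (hybNorm_sub_le _ _) (zpow_pos hr0 n).le

lemma hybTerm_mul_le (hr0 : 0 < r) (f g : LaurentSeries ℂ) (n : ℤ) :
    hybNorm ((f * g).coeff n) * r ^ n ≤
      ∑ p ∈ antidiagonal f.isPWO_support g.isPWO_support n,
        (hybNorm (f.coeff p.1) * r ^ p.1) * (hybNorm (g.coeff p.2) * r ^ p.2) := by
  rw [HahnSeries.coeff_mul]
  refine (mul_le_mul_of_nonneg_right (hybNorm_sum_le _ _) (zpow_pos hr0 n).le).trans ?_
  rw [Finset.sum_mul]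
  refine Finset.sum_le_sum fun p hp => ?_
  rw [← (mem_antidiagonal.1 hp).2.2, zpow_add₀ hr0.ne', mul_mul_mul_comm]
  exact mul_le_mul_of_nonneg_right (hybNorm_mul_le _ _)
    (mul_nonneg (zpow_pos hr0 _).le (zpow_pos hr0 _).le)

lemma sum_hybTerm_mul_le (hr0 : 0 < r) (hf : f ∈ Ar r) (hg : g ∈ Ar r) (S : Finset ℤ) :
    ∑ n ∈ S, hybNorm ((f * g).coeff n) * r ^ n ≤ hybnorm r f * hybnorm r g := by
  set A := antidiagonal f.isPWO_support g.isPWO_support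
  have hdisj : (S : Set ℤ).PairwiseDisjoint A := fun m _ n _ hmn =>
    Finset.disjoint_left.2 fun p hpm hpn =>
      hmn ((mem_antidiagonal.1 hpm).2.2.symm.trans (mem_antidiagonal.1 hpn).2.2)
  have hprod := Summable.mul_of_nonneg hf hg (hybTerm_nonneg hr0 f) (hybTerm_nonneg hr0 g)
  calc ∑ n ∈ S, hybNorm ((f * g).coeff n) * r ^ n
      ≤ ∑ n ∈ S, ∑ p ∈ A n,
          (hybNorm (f.coeff p.1) * r ^ p.1) * (hybNorm (g.coeff p.2) * r ^ p.2) :=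
        Finset.sum_le_sum fun n _ => hybTerm_mul_le hr0 f g n
    _ = ∑ p ∈ S.biUnion A,
          (hybNorm (f.coeff p.1) * r ^ p.1) * (hybNorm (g.coeff p.2) * r ^ p.2) :=
        (Finset.sum_biUnion hdisj).symm
    _ ≤ ∑' p : ℤ × ℤ,
          (hybNorm (f.coeff p.1) * r ^ p.1) * (hybNorm (g.coeff p.2) * r ^ p.2) :=
        hprod.sum_le_tsum _ fun p _ =>
          mul_nonneg (hybTerm_nonneg hr0 f p.1) (hybTerm_nonneg hr0 g p.2)
    _ = hybnorm r f * hybnorm r g := (hf.tsum_mul_tsum hg hprod).symm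

lemma mul_mem_Ar_and_hybnorm_mul_le (hr0 : 0 < r) (hf : f ∈ Ar r) (hg : g ∈ Ar r) :
    f * g ∈ Ar r ∧ hybnorm r (f * g) ≤ hybnorm r f * hybnorm r g :=
  mem_Ar_and_hybnorm_le_of_sum_le hr0 (sum_hybTerm_mul_le hr0 hf hg)

lemma coeff_eq_of_hybnorm_sub_lt (hr0 : 0 < r) (hfg : f - g ∈ Ar r) {n : ℤ}
    (h : hybnorm r (f - g) < r ^ n) : f.coeff n = g.coeff n := by
  have hterm := (hybTerm_le_hybnorm hr0 hfg n).trans_lt h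
  rw [mul_lt_iff_lt_one_left (zpow_pos hr0 n)] at hterm
  rw [← sub_eq_zero, ← HahnSeries.coeff_sub]
  exact eq_zero_of_hybNorm_lt_one hterm

lemma coeff_eq_of_hybnorm_sub_lt_one (hr0 : 0 < r) (hr1 : r ≤ 1) (hfg : f - g ∈ Ar r)
    (h : hybnorm r (f - g) < 1) {n : ℤ} (hn : n ≤ 0) : f.coeff n = g.coeff n :=
  coeff_eq_of_hybnorm_sub_lt hr0 hfg (h.trans_le (one_le_zpow_of_nonpos₀ hr0 hr1 hn))

/-- Fatou's lemma for `‖·‖_{hyb,r}` along coefficientwise convergence. -/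
lemma mem_Ar_and_hybnorm_le_of_coeff_eventually_eq (hr0 : 0 < r) {ι : Type*} {l : Filter ι}
    [l.NeBot] {G : ι → LaurentSeries ℂ} {H : LaurentSeries ℂ} {ε : ℝ}
    (hcoeff : ∀ n, ∀ᶠ k in l, (G k).coeff n = H.coeff n)
    (hG : ∀ᶠ k in l, G k ∈ Ar r ∧ hybnorm r (G k) ≤ ε) :
    H ∈ Ar r ∧ hybnorm r H ≤ ε := by
  refine mem_Ar_and_hybnorm_le_of_sum_le hr0 fun S => ?_
  obtain ⟨k, hkS, hk, hkε⟩ :=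
    ((S.eventually_all.2 fun n _ => hcoeff n).and hG).exists
  calc ∑ n ∈ S, hybNorm (H.coeff n) * r ^ n
      = ∑ n ∈ S, hybNorm ((G k).coeff n) * r ^ n :=
        Finset.sum_congr rfl fun n hn => by rw [hkS n hn]
    _ ≤ hybnorm r (G k) := hk.sum_le_tsum S fun n _ => hybTerm_nonneg hr0 _ n
    _ ≤ ε := hkε

end Ar

lemma LaurentSeries.exists_coeff_eq_of_eqOn_neg {R : Type*} [Zero R] (g : LaurentSeries R)
    {c : ℤ → R} (h : ∀ n < 0, c n = g.coeff n) : ∃ L : LaurentSeries R, L.coeff = c := by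
  have hsupp : Function.support c ⊆ Function.support g.coeff ∪ Set.Ici 0 := fun n hn => by
    by_cases hn0 : n < 0
    · exact Or.inl (by rwa [Function.mem_support, ← h n hn0])
    · exact Or.inr (not_lt.1 hn0)
  exact ⟨⟨c, (g.isPWO_support.union (BddBelow.isWF ⟨0, fun _ hx => hx⟩).isPWO).mono
    hsupp⟩, rfl⟩

lemma exists_coeff_eventually_eq_of_cauchy {r : ℝ} (hr0 : 0 < r) (hr1 : r ≤ 1)
    {F : ℕ → LaurentSeries ℂ} (hF : ∀ n, F n ∈ Ar r)
    (hC : ∀ ε : ℝ, 0 < ε → ∃ N : ℕ, ∀ m, N ≤ m → ∀ n, N ≤ n → hybnorm r (F m - F n) < ε) :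
    ∃ L : LaurentSeries ℂ, ∀ n, ∀ᶠ k in atTop, (F k).coeff n = L.coeff n := by
  have stab : ∀ n : ℤ, ∃ N : ℕ, ∀ k, N ≤ k → (F k).coeff n = (F N).coeff n := fun n => by
    obtain ⟨N, hN⟩ := hC (r ^ n) (zpow_pos hr0 n)
    exact ⟨N, fun k hk =>
      coeff_eq_of_hybnorm_sub_lt hr0 (sub_mem_Ar hr0 (hF k) (hF N)) (hN k hk N le_rfl)⟩
  choose N hN using stab
  obtain ⟨N₀, hN₀⟩ := hC 1 one_pos
  obtain ⟨L, hL⟩ := (F N₀).exists_coeff_eq_of_eqOn_neg (c := fun n => (F (N n)).coeff n)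
    fun n hn => by
      rw [← hN n _ (le_max_left _ N₀)]
      exact coeff_eq_of_hybnorm_sub_lt_one hr0 hr1 (sub_mem_Ar hr0 (hF _) (hF N₀))
        (hN₀ _ (le_max_right _ _) N₀ le_rfl) hn.le
  exact ⟨L, fun n => eventually_atTop.2 ⟨N n, fun k hk => (hN n k hk).trans (congrFun hL n).symm⟩⟩

/-- `A_r` is a Banach ring: it is stable under multiplication in `ℂ((t))`,
the hybrid norm is submultiplicative, and `A_r` is complete for the distance
`d(f,g) = ‖f - g‖_{hyb,r}`. -/
theorem Ar_is_banach_ring (r : ℝ) (hr0 : 0 < r) (hr1 : r < 1) :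
    (∀ f ∈ Ar r, ∀ g ∈ Ar r,
      f * g ∈ Ar r ∧ hybnorm r (f * g) ≤ hybnorm r f * hybnorm r g) ∧
    (∀ F : ℕ → LaurentSeries ℂ, (∀ n, F n ∈ Ar r) →
      (∀ ε : ℝ, 0 < ε → ∃ N : ℕ, ∀ m, N ≤ m → ∀ n, N ≤ n → hybnorm r (F m - F n) < ε) →
      ∃ L ∈ Ar r,
        Filter.Tendsto (fun n => hybnorm r (F n - L)) Filter.atTop (nhds 0)) := by
  refine ⟨fun f hf g hg => mul_mem_Ar_and_hybnorm_mul_le hr0 hf hg, fun F hF hC => ?_⟩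
  obtain ⟨L, hL⟩ := exists_coeff_eventually_eq_of_cauchy hr0 hr1.le hF hC
  have tail : ∀ ε > 0, ∀ᶠ m in atTop, F m - L ∈ Ar r ∧ hybnorm r (F m - L) ≤ ε := by
    intro ε hε
    obtain ⟨N, hN⟩ := hC ε hε
    refine eventually_atTop.2 ⟨N, fun m hm => ?_⟩
    exact mem_Ar_and_hybnorm_le_of_coeff_eventually_eq hr0 (G := fun k => F m - F k)
      (fun n => (hL n).mono fun k hk => by simp [hk])
      (eventually_atTop.2 ⟨N, fun k hk => ⟨sub_mem_Ar hr0 (hF m) (hF k), (hN m hm k hk).le⟩⟩)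
  obtain ⟨m, hm, -⟩ := (tail 1 one_pos).exists
  refine ⟨L, by simpa using sub_mem_Ar hr0 (hF m) hm, tendsto_order.2 ⟨?_, ?_⟩⟩
  · exact fun a ha => Eventually.of_forall fun m => ha.trans_le (hybnorm_nonneg hr0 _)
  · exact fun a ha => (tail (a / 2) (half_pos ha)).mono fun m hm => hm.2.trans_lt (half_lt_self ha)
end

section
/- Let N be a multiplicative seminorm on the field ℂ such that N(c) ≤ max{1, |c|} for all c ∈ ℂ. Then either N(c) = 1 for all c ∈ ℂ ∖ {0} (N is the trivial norm), or there exists ε ∈ (0, 1] such that N(c) = |c|^ε for all c ∈ ℂ. -/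
/-!
Since `N c ≤ 1` whenever `‖c‖ ≤ 1`, the relation `N c * N c⁻¹ = 1` forces `N = 1` on the unit
circle, so `N c = N ‖c‖`, and on the positive reals `N` is multiplicative and monotone. Then
`x ↦ log N (exp x)` is a monotone, hence measurable, hence continuous additive map `ℝ → ℝ`, so it
is `x ↦ ε x` and `N c = ‖c‖ ^ ε`. Monotonicity gives `ε ≥ 0` and `N e ≤ e` gives `ε ≤ 1`; the
trivial norm is the case `ε = 0`.
-/

def IsMultSeminorm {A : Type*} [CommRing A] (N : A → ℝ) : Prop :=
  (∀ a : A, 0 ≤ N a) ∧ N 0 = 0 ∧ N 1 = 1 ∧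
    (∀ a b : A, N (a * b) = N a * N b) ∧ (∀ a b : A, N (a + b) ≤ N a + N b)

theorem AddMonoidHom.eq_mul_of_monotone (g : ℝ →+ ℝ) (hg : Monotone g) (x : ℝ) :
    g x = x * g 1 := by
  simpa using map_real_smul g
    (MeasureTheory.Measure.AddMonoidHom.continuous_of_measurable g hg.measurable) x 1

namespace IsMultSeminorm

section CommRing

variable {A : Type*} [CommRing A] {N : A → ℝ}

theorem nonneg (hN : IsMultSeminorm N) (a : A) : 0 ≤ N a := hN.1 a

theorem map_zero (hN : IsMultSeminorm N) : N 0 = 0 := hN.2.1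

theorem map_one (hN : IsMultSeminorm N) : N 1 = 1 := hN.2.2.1

theorem map_mul (hN : IsMultSeminorm N) (a b : A) : N (a * b) = N a * N b := hN.2.2.2.1 a b

end CommRing

section Field

variable {K : Type*} [Field K] {N : K → ℝ}

theorem mul_apply_inv (hN : IsMultSeminorm N) {a : K} (ha : a ≠ 0) : N a * N a⁻¹ = 1 := by
  rw [← hN.map_mul, mul_inv_cancel₀ ha, hN.map_one]

theorem pos (hN : IsMultSeminorm N) {a : K} (ha : a ≠ 0) : 0 < N a :=
  (hN.nonneg a).lt_of_ne fun h => by simpa [← h] using hN.mul_apply_inv ha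

theorem eq_one_of_le_one_of_inv_le_one (hN : IsMultSeminorm N) {a : K} (ha : a ≠ 0)
    (h : N a ≤ 1) (h_inv : N a⁻¹ ≤ 1) : N a = 1 := by
  nlinarith [hN.mul_apply_inv ha, hN.nonneg a, hN.nonneg a⁻¹]

end Field

section Complex

variable {N : ℂ → ℝ}

theorem le_one_of_norm_le_one (hbd : ∀ c : ℂ, N c ≤ max 1 ‖c‖) {c : ℂ} (hc : ‖c‖ ≤ 1) :
    N c ≤ 1 :=
  (hbd c).trans_eq (max_eq_left hc)

theorem eq_one_of_norm_eq_one (hN : IsMultSeminorm N) (hbd : ∀ c : ℂ, N c ≤ max 1 ‖c‖)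
    {c : ℂ} (hc : ‖c‖ = 1) : N c = 1 := by
  have hc0 : c ≠ 0 := norm_ne_zero_iff.mp (by simp [hc])
  exact hN.eq_one_of_le_one_of_inv_le_one hc0 (le_one_of_norm_le_one hbd hc.le)
    (le_one_of_norm_le_one hbd (by simp [hc]))

theorem apply_norm (hN : IsMultSeminorm N) (hbd : ∀ c : ℂ, N c ≤ max 1 ‖c‖) (c : ℂ) :
    N ‖c‖ = N c := by
  conv_rhs => rw [← Complex.norm_mul_exp_arg_mul_I c]
  rw [hN.map_mul, hN.eq_one_of_norm_eq_one hbd (Complex.norm_exp_ofReal_mul_I _), mul_one]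

theorem monotone_apply_exp (hN : IsMultSeminorm N) (hbd : ∀ c : ℂ, N c ≤ max 1 ‖c‖) :
    Monotone fun x : ℝ => N (Real.exp x) := by
  intro x y hxy
  have hsplit : (Real.exp x : ℂ) = Real.exp y * Real.exp (x - y) := by
    rw [← Complex.ofReal_mul, ← Real.exp_add, add_sub_cancel]
  have hle : N (Real.exp (x - y)) ≤ 1 := le_one_of_norm_le_one hbd <| by
    rw [Complex.norm_real, Real.norm_of_nonneg (Real.exp_nonneg _)]
    exact Real.exp_le_one_iff.mpr (sub_nonpos.mpr hxy)
  simp only [hsplit, hN.map_mul]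
  exact mul_le_of_le_one_right (hN.nonneg _) hle

noncomputable def logExp (hN : IsMultSeminorm N) : ℝ →+ ℝ :=
  AddMonoidHom.mk' (fun x => Real.log (N (Real.exp x))) fun x y => by
    have hpos (z : ℝ) : N (Real.exp z) ≠ 0 :=
      (hN.pos (Complex.ofReal_ne_zero.mpr (Real.exp_pos z).ne')).ne'
    rw [Real.exp_add, Complex.ofReal_mul, hN.map_mul, Real.log_mul (hpos x) (hpos y)]

theorem logExp_apply (hN : IsMultSeminorm N) (x : ℝ) :
    hN.logExp x = Real.log (N (Real.exp x)) := rfl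

theorem apply_ofReal_eq_rpow (hN : IsMultSeminorm N) (hbd : ∀ c : ℂ, N c ≤ max 1 ‖c‖)
    {t : ℝ} (ht : 0 < t) : N t = t ^ hN.logExp 1 := by
  have hmono : Monotone hN.logExp := fun x y hxy =>
    Real.log_le_log (hN.pos (by simp)) (hN.monotone_apply_exp hbd hxy)
  rw [Real.rpow_def_of_pos ht, ← hN.logExp.eq_mul_of_monotone hmono, logExp_apply,
    Real.exp_log ht, Real.exp_log (hN.pos (by simp [ht.ne']))]

theorem exists_eq_norm_rpow (hN : IsMultSeminorm N) (hbd : ∀ c : ℂ, N c ≤ max 1 ‖c‖) :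
    ∃ ε : ℝ, 0 ≤ ε ∧ ε ≤ 1 ∧ ∀ c : ℂ, c ≠ 0 → N c = ‖c‖ ^ ε := by
  refine ⟨hN.logExp 1, ?_, ?_, fun c hc => ?_⟩
  · have := hN.monotone_apply_exp hbd zero_le_one
    simp only [Real.exp_zero, Complex.ofReal_one, hN.map_one] at this
    exact Real.log_nonneg this
  · have hNe := hbd (Real.exp 1)
    rw [Complex.norm_real, Real.norm_of_nonneg (Real.exp_nonneg 1),
      max_eq_right (Real.one_le_exp zero_le_one)] at hNe
    simpa only [logExp_apply, Real.log_exp] using Real.log_le_log (hN.pos (by simp)) hNe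
  · rw [← hN.apply_norm hbd, hN.apply_ofReal_eq_rpow hbd (norm_pos_iff.mpr hc)]

end Complex

end IsMultSeminorm

/-- A multiplicative seminorm on `ℂ` bounded by the hybrid norm
`max {1, |·|}` is either the trivial norm or `|·|^ε` for some `ε ∈ (0,1]`. -/
theorem seminorm_on_C_classification (N : ℂ → ℝ) (hN : IsMultSeminorm N)
    (hbd : ∀ c : ℂ, N c ≤ max 1 ‖c‖) :
    (∀ c : ℂ, c ≠ 0 → N c = 1) ∨
      ∃ ε : ℝ, 0 < ε ∧ ε ≤ 1 ∧ ∀ c : ℂ, N c = ‖c‖ ^ ε := by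
  obtain ⟨ε, hε0, hε1, hNε⟩ := hN.exists_eq_norm_rpow hbd
  rcases hε0.eq_or_lt with rfl | hε
  · exact Or.inl fun c hc => by rw [hNε c hc, Real.rpow_zero]
  · refine Or.inr ⟨ε, hε, hε1, fun c => ?_⟩
    rcases eq_or_ne c 0 with rfl | hc
    · rw [hN.map_zero, norm_zero, Real.zero_rpow hε.ne']
    · exact hNε c hc
end

section
/- Fix ε ∈ (0, 1]. Let N be a multiplicative seminorm on the polynomial ring ℂ[X] such that N(c) = |c|^ε for every constant polynomial c ∈ ℂ. Then there exists z ∈ ℂ such that N(P) = |P(z)|^ε for all P ∈ ℂ[X]. -/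
/-! Ostrowski's argument, as in the Gelfand–Mazur theorem. The function `z ↦ N (X - C z)` is
`ε`-Hölder and grows like `‖z‖ ^ ε`, so it attains its minimum `m` at some `z₀`. If `m > 0`,
factoring `(X - C z₀) ^ n - C (w ^ n)` over the `n`-th roots of unity gives
`N (X - C (z₀ + w)) * m ^ (n - 1) ≤ m ^ n + ‖w‖ ^ (ε * n)`, so `N (X - C (z₀ + w)) = m` as soon as
`‖w‖ ^ ε < m`. The level set `{z | N (X - C z) = m}` is then clopen, hence all of `ℂ`, which
contradicts the growth. Hence `N (X - C z₀) = 0`, and as `X - C z₀` divides `P - C (P.eval z₀)`,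
`N P = N (C (P.eval z₀)) = ‖P.eval z₀‖ ^ ε`. -/

open Polynomial Filter Set

namespace IsMultSeminorm

variable {A : Type*} [CommRing A] {N : A → ℝ}

theorem map_neg_one (hN : IsMultSeminorm N) : N (-1) = 1 := by
  obtain ⟨hpos, -, h1, hmul, -⟩ := hN
  have hsq : N (-1) * N (-1) = 1 := by rw [← hmul, neg_one_mul, neg_neg, h1]
  nlinarith [hpos (-1)]

def toMulRingSeminorm (hN : IsMultSeminorm N) : MulRingSeminorm A where
  toFun := N
  map_zero' := hN.2.1
  add_le' := hN.2.2.2.2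
  neg' a := by rw [← neg_one_mul, hN.2.2.2.1, hN.map_neg_one, one_mul]
  map_one' := hN.2.2.1
  map_mul' := hN.2.2.2.1

@[simp]
theorem coe_toMulRingSeminorm (hN : IsMultSeminorm N) : ⇑hN.toMulRingSeminorm = N := rfl

end IsMultSeminorm

theorem MulRingSeminorm.apply_eq_apply_C_eval_of_apply_X_sub_C_eq_zero {R : Type*} [CommRing R]
    (N : MulRingSeminorm R[X]) {a : R} (ha : N (X - C a) = 0) (P : R[X]) :
    N P = N (C (P.eval a)) := by
  obtain ⟨Q, hQ⟩ := X_sub_C_dvd_sub_C_eval (a := a) (p := P)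
  have hdiff : N (P - C (P.eval a)) = 0 := by rw [hQ, map_mul, ha, zero_mul]
  exact sub_eq_zero.1 (abs_nonpos_iff.1 (hdiff ▸ abs_sub_map_le_sub N _ _))

theorem Polynomial.X_sub_C_pow_sub_C_pow_eq_prod {R : Type*} [CommRing R] [IsDomain R] {ζ : R}
    {n : ℕ} (hζ : IsPrimitiveRoot ζ n) (hn : 0 < n) (z w : R) :
    (X - C z) ^ n - C (w ^ n) = ∏ i ∈ Finset.range n, (X - C (z + ζ ^ i * w)) := by
  have h := congrArg (aeval (X - C z : R[X])) (X_pow_sub_C_eq_prod hζ hn (rfl : w ^ n = w ^ n))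
  simpa [map_prod, sub_sub, C_add, C_mul, C_pow] using h

theorem le_of_forall_mul_pow_le_pow_add_pow {a m r : ℝ} (hr : 0 ≤ r) (hrm : r < m)
    (h : ∀ k : ℕ, a * m ^ k ≤ m ^ (k + 1) + r ^ (k + 1)) : a ≤ m := by
  have hm : 0 < m := hr.trans_lt hrm
  have hbound (k : ℕ) : a ≤ m + r * (r / m) ^ k :=
    calc a ≤ (m ^ (k + 1) + r ^ (k + 1)) / m ^ k := (le_div_iff₀ (pow_pos hm k)).2 (h k)
      _ = m + r * (r / m) ^ k := by rw [div_pow, pow_succ, pow_succ]; field_simp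
  have hlim : Tendsto (fun k : ℕ => m + r * (r / m) ^ k) atTop (nhds (m + r * 0)) :=
    ((tendsto_pow_atTop_nhds_zero_of_lt_one (by positivity) ((div_lt_one hm).2 hrm)).const_mul
      r).const_add m
  simpa using ge_of_tendsto' hlim hbound

theorem tendsto_rpow_norm_sub_self {E : Type*} [SeminormedAddCommGroup E] {ε : ℝ} (hε : 0 < ε)
    (x : E) : Tendsto (fun y => ‖y - x‖ ^ ε) (nhds x) (nhds 0) := by
  simpa [Function.comp_def, Real.zero_rpow hε.ne'] using
    ((Real.continuous_rpow_const hε.le).tendsto 0).comp (tendsto_norm_sub_self x)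

namespace MulRingSeminorm

variable (N : MulRingSeminorm ℂ[X]) {ε : ℝ}

theorem abs_apply_X_sub_C_sub_le (hC : ∀ c : ℂ, N (C c) = ‖c‖ ^ ε) (z w : ℂ) :
    |N (X - C z) - N (X - C w)| ≤ ‖z - w‖ ^ ε :=
  calc |N (X - C z) - N (X - C w)| ≤ N (X - C z - (X - C w)) := abs_sub_map_le_sub N _ _
    _ = ‖z - w‖ ^ ε := by rw [sub_sub_sub_cancel_left, ← C_sub, hC, norm_sub_rev]

theorem continuous_apply_X_sub_C (hC : ∀ c : ℂ, N (C c) = ‖c‖ ^ ε) (hε : 0 < ε) :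
    Continuous fun z => N (X - C z) :=
  continuous_iff_continuousAt.2 fun w => tendsto_iff_norm_sub_tendsto_zero.2 <|
    squeeze_zero (fun _ => norm_nonneg _) (fun z => abs_apply_X_sub_C_sub_le N hC z w)
      (tendsto_rpow_norm_sub_self hε w)

theorem rpow_norm_sub_le_apply_X_sub_C (hC : ∀ c : ℂ, N (C c) = ‖c‖ ^ ε) (z : ℂ) :
    ‖z‖ ^ ε - N X ≤ N (X - C z) := by
  have := map_sub_le_add N X (X - C z)
  rw [sub_sub_cancel, hC] at this
  linarith

theorem tendsto_apply_X_sub_C_cocompact (hC : ∀ c : ℂ, N (C c) = ‖c‖ ^ ε) (hε : 0 < ε) :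
    Tendsto (fun z => N (X - C z)) (cocompact ℂ) atTop := by
  refine tendsto_atTop_mono (fun z => ?_) <| tendsto_atTop_add_const_right _ (-N X)
    ((tendsto_rpow_atTop hε).comp tendsto_norm_cocompact_atTop)
  simpa [sub_eq_add_neg] using rpow_norm_sub_le_apply_X_sub_C N hC z

theorem apply_X_sub_C_add_mul_pow_le (hC : ∀ c : ℂ, N (C c) = ‖c‖ ^ ε) {z : ℂ}
    (hmin : ∀ y, N (X - C z) ≤ N (X - C y)) (w : ℂ) (k : ℕ) :
    N (X - C (z + w)) * N (X - C z) ^ k ≤ N (X - C z) ^ (k + 1) + (‖w‖ ^ ε) ^ (k + 1) := by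
  obtain ⟨ζ, hζ⟩ : ∃ ζ : ℂ, IsPrimitiveRoot ζ (k + 1) :=
    ⟨_, Complex.isPrimitiveRoot_exp (k + 1) k.succ_ne_zero⟩
  calc N (X - C (z + w)) * N (X - C z) ^ k
      ≤ N (X - C (z + w)) * ∏ i ∈ Finset.range k, N (X - C (z + ζ ^ (i + 1) * w)) := by
        gcongr
        calc N (X - C z) ^ k = ∏ _i ∈ Finset.range k, N (X - C z) := by simp
          _ ≤ _ := Finset.prod_le_prod (fun _ _ => apply_nonneg N _) fun _ _ => hmin _
    _ = N ((X - C z) ^ (k + 1) - C (w ^ (k + 1))) := by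
        rw [X_sub_C_pow_sub_C_pow_eq_prod hζ k.succ_pos, map_prod, Finset.prod_range_succ',
          pow_zero, one_mul, mul_comm]
    _ ≤ N ((X - C z) ^ (k + 1)) + N (C (w ^ (k + 1))) := map_sub_le_add N _ _
    _ = N (X - C z) ^ (k + 1) + (‖w‖ ^ ε) ^ (k + 1) := by
        rw [map_pow, hC, norm_pow, Real.rpow_pow_comm (norm_nonneg w)]

theorem apply_X_sub_C_add_eq_of_forall_le (hC : ∀ c : ℂ, N (C c) = ‖c‖ ^ ε) {z : ℂ}
    (hmin : ∀ y, N (X - C z) ≤ N (X - C y)) {w : ℂ} (hw : ‖w‖ ^ ε < N (X - C z)) :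
    N (X - C (z + w)) = N (X - C z) :=
  (le_of_forall_mul_pow_le_pow_add_pow (by positivity) hw
    (apply_X_sub_C_add_mul_pow_le N hC hmin w)).antisymm (hmin _)

theorem exists_apply_X_sub_C_eq_zero (hC : ∀ c : ℂ, N (C c) = ‖c‖ ^ ε) (hε : 0 < ε) :
    ∃ z, N (X - C z) = 0 := by
  have hcont := continuous_apply_X_sub_C N hC hε
  have htend := tendsto_apply_X_sub_C_cocompact N hC hε
  obtain ⟨z₀, hz₀⟩ := hcont.exists_forall_le htend
  refine ⟨z₀, (apply_nonneg N _).antisymm' (not_lt.1 fun hm => ?_)⟩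
  have hopen : IsOpen {z | N (X - C z) = N (X - C z₀)} := by
    refine isOpen_iff_mem_nhds.2 fun z hz => ?_
    have hmin : ∀ y, N (X - C z) ≤ N (X - C y) := fun y => hz.trans_le (hz₀ y)
    filter_upwards [(tendsto_rpow_norm_sub_self hε z).eventually (gt_mem_nhds (hz ▸ hm))]
      with y hy
    have hy := apply_X_sub_C_add_eq_of_forall_le N hC hmin (w := y - z) hy
    rwa [add_sub_cancel, hz] at hy
  have hconst : ∀ z, N (X - C z) = N (X - C z₀) := Set.eq_univ_iff_forall.1 <|
    IsClopen.eq_univ ⟨isClosed_eq hcont continuous_const, hopen⟩ ⟨z₀, rfl⟩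
  exact not_tendsto_const_atTop _ (cocompact ℂ) (htend.congr hconst)

end MulRingSeminorm

theorem seminorm_on_polynomials_is_evaluation_general (ε : ℝ) (hε0 : 0 < ε)
    (N : Polynomial ℂ → ℝ) (hN : IsMultSeminorm N)
    (hC : ∀ c : ℂ, N (Polynomial.C c) = ‖c‖ ^ ε) :
    ∃ z : ℂ, ∀ P : Polynomial ℂ, N P = ‖P.eval z‖ ^ ε := by
  obtain ⟨z, hz⟩ := hN.toMulRingSeminorm.exists_apply_X_sub_C_eq_zero hC hε0
  refine ⟨z, fun P => ?_⟩
  simpa [hC] using hN.toMulRingSeminorm.apply_eq_apply_C_eval_of_apply_X_sub_C_eq_zero hz P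

/-- (Gelfand–Mazur-type) A multiplicative seminorm on `ℂ[X]` restricting to
`|·|^ε` on the constants is given by evaluation at some point `z ∈ ℂ`. -/
theorem seminorm_on_polynomials_is_evaluation (ε : ℝ) (hε0 : 0 < ε) (hε1 : ε ≤ 1)
    (N : Polynomial ℂ → ℝ) (hN : IsMultSeminorm N)
    (hC : ∀ c : ℂ, N (Polynomial.C c) = ‖c‖ ^ ε) :
    ∃ z : ℂ, ∀ P : Polynomial ℂ, N P = ‖P.eval z‖ ^ ε :=
  seminorm_on_polynomials_is_evaluation_general ε hε0 N hN hC
end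

section
/- Let B be a commutative unital ℂ-algebra and let N be a multiplicative seminorm on B such that N(c·1) = |c|^ε for all c ∈ ℂ, for some fixed ε ∈ (0, 1]. Then there exists a ℂ-algebra homomorphism χ : B → ℂ such that N(f) = |χ(f)|^ε for all f ∈ B. -/
/-!
For `f : B` the function `c ↦ N (f - c)` is continuous on `ℂ` and tends to infinity, so it
attains a minimum `m`. Suppose `m > 0` and `x = f - c` is a minimiser. For `|w| ^ ε < m`, factor
`x ^ (n + 1) - w ^ (n + 1)` into `n + 1` linear factors `x - ζ`, one of which is `x - w`; bounding
the other factors below by `m` gives `N (x - w) · m ^ n ≤ m ^ (n + 1) + |w| ^ (ε (n + 1))`, and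
`n → ∞` yields `N (x - w) ≤ m`. So the set of minimisers is open, hence all of `ℂ`, which
contradicts the growth at infinity. Thus `m = 0`: every `f` is congruent to a scalar modulo
the ideal `{N = 0}`, the quotient by it is `ℂ`, and the quotient map is the character.
-/

open Polynomial Filter Topology

theorem Polynomial.Monic.aeval_eq_prod_roots_sub {K B : Type*} [Field K] [IsAlgClosed K]
    [CommRing B] [Algebra K B] {q : K[X]} (hq : q.Monic) (x : B) :
    aeval x q = (q.roots.map fun z => x - algebraMap K B z).prod := by
  conv_lhs => rw [(IsAlgClosed.splits q).eq_prod_roots_of_monic hq]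
  simp [map_multiset_prod, Multiset.map_map]

theorem tendsto_norm_sub_rpow_nhds_zero {E : Type*} [SeminormedAddCommGroup E] {ε : ℝ}
    (hε : 0 < ε) (a : E) : Tendsto (fun x => ‖x - a‖ ^ ε) (𝓝 a) (𝓝 0) := by
  have hcont : Continuous fun x => ‖x - a‖ ^ ε := by fun_prop (disch := exact hε.le)
  simpa [Real.zero_rpow hε.ne'] using hcont.tendsto a

def IsMultSeminorm.toMulRingSeminorm_s15 {A : Type*} [CommRing A] {N : A → ℝ}
    (hN : IsMultSeminorm N) : MulRingSeminorm A where
  toFun := N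
  map_zero' := hN.2.1
  add_le' := hN.2.2.2.2
  map_one' := hN.2.2.1
  map_mul' := hN.2.2.2.1
  neg' a := by
    obtain ⟨h0, -, h1, hmul, -⟩ := hN
    have hsq : N (-1) * N (-1) = 1 := by rw [← hmul, neg_one_mul, neg_neg, h1]
    have hneg_one : N (-1) = 1 := by nlinarith [h0 (-1)]
    rw [neg_eq_neg_one_mul, hmul, hneg_one, one_mul]

namespace MulRingSeminorm

def ker {R : Type*} [CommRing R] (p : MulRingSeminorm R) : Ideal R where
  carrier := {x | p x = 0}
  zero_mem' := map_zero p
  add_mem' {a b} ha hb :=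
    le_antisymm ((map_add_le_add p a b).trans_eq (by rw [ha, hb, add_zero])) (apply_nonneg p _)
  smul_mem' c x hx := by
    simp only [Set.mem_ofPred_eq, smul_eq_mul, map_mul] at hx ⊢
    rw [hx, mul_zero]

theorem mem_ker {R : Type*} [CommRing R] {p : MulRingSeminorm R} {x : R} :
    x ∈ p.ker ↔ p x = 0 := Iff.rfl

theorem eq_of_map_sub_eq_zero {R : Type*} [CommRing R] (p : MulRingSeminorm R) {x y : R}
    (h : p (x - y) = 0) : p x = p y := by
  have := abs_sub_map_le_sub p x y
  rw [h] at this
  exact sub_eq_zero.mp (abs_nonpos_iff.mp this)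

theorem exists_algHom_map_sub_algebraMap_eq_zero {K B : Type*} [Field K] [CommRing B]
    [Algebra K B] (p : MulRingSeminorm B) (h : ∀ f, ∃ c : K, p (f - algebraMap K B c) = 0) :
    ∃ χ : B →ₐ[K] K, ∀ f, p (f - algebraMap K B (χ f)) = 0 := by
  have hker : p.ker ≠ ⊤ := (Ideal.ne_top_iff_one _).mpr fun h1 => by
    simp [mem_ker] at h1
  have := Ideal.Quotient.nontrivial_iff.mpr hker
  have hsurj : Function.Surjective (Algebra.ofId K (B ⧸ p.ker)) := fun q => by
    obtain ⟨f, rfl⟩ := Ideal.Quotient.mk_surjective q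
    obtain ⟨c, hc⟩ := h f
    exact ⟨c, (Ideal.Quotient.eq.mpr hc).symm⟩
  let e := AlgEquiv.ofBijective _ ⟨(algebraMap K (B ⧸ p.ker)).injective, hsurj⟩
  refine ⟨e.symm.toAlgHom.comp (Ideal.Quotient.mkₐ K p.ker), fun f => ?_⟩
  exact Ideal.Quotient.eq.mp (e.apply_symm_apply (Ideal.Quotient.mk p.ker f)).symm

section AlgClosed

variable {K B : Type*} [Field K] [IsAlgClosed K] [CommRing B] [Algebra K B]
  (p : MulRingSeminorm B)

theorem map_sub_algebraMap_mul_pow_le {x : B} {m : ℝ} (hm : 0 ≤ m)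
    (hmin : ∀ z, m ≤ p (x - algebraMap K B z)) (w : K) (n : ℕ) :
    p (x - algebraMap K B w) * m ^ n ≤ p x ^ (n + 1) + p (algebraMap K B w) ^ (n + 1) := by
  classical
  set q : K[X] := X ^ (n + 1) - C (w ^ (n + 1))
  have hq : q.Monic := monic_X_pow_sub_C _ n.succ_ne_zero
  have hw : w ∈ q.roots := by
    rw [mem_roots hq.ne_zero]
    simp [q]
  have hcard : Multiset.card (q.roots.erase w) = n := by
    rw [Multiset.card_erase_of_mem hw, ← (IsAlgClosed.splits q).natDegree_eq_card_roots,
      natDegree_X_pow_sub_C]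
    rfl
  calc p (x - algebraMap K B w) * m ^ n
      ≤ p (x - algebraMap K B w) *
          ((q.roots.erase w).map fun z => p (x - algebraMap K B z)).prod := by
        gcongr
        calc m ^ n = ((q.roots.erase w).map fun _ => m).prod := by
              rw [Multiset.map_const', Multiset.prod_replicate, hcard]
          _ ≤ _ := Multiset.prod_map_le_prod_map₀ _ _ (fun _ _ => hm) fun z _ => hmin z
    _ = p (aeval x q) := by
        rw [hq.aeval_eq_prod_roots_sub, map_multiset_prod, Multiset.map_map,
          ← Multiset.prod_map_erase hw]
        rfl
    _ = p (x ^ (n + 1) - algebraMap K B (w ^ (n + 1))) := by simp [q]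
    _ ≤ p x ^ (n + 1) + p (algebraMap K B w) ^ (n + 1) := by
        simpa only [map_pow] using map_sub_le_add p (x ^ (n + 1)) (algebraMap K B (w ^ (n + 1)))

theorem map_sub_algebraMap_le_of_forall_le {x : B} (hmin : ∀ z, p x ≤ p (x - algebraMap K B z))
    {w : K} (hw : p (algebraMap K B w) < p x) : p (x - algebraMap K B w) ≤ p x := by
  set m := p x
  set s := p (algebraMap K B w)
  have hm : 0 < m := (apply_nonneg p _).trans_lt hw
  have hbound (n : ℕ) : p (x - algebraMap K B w) ≤ m + s * (s / m) ^ n := by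
    have key : p (x - algebraMap K B w) * m ^ n ≤ m ^ (n + 1) + s ^ (n + 1) :=
      map_sub_algebraMap_mul_pow_le p hm.le hmin w n
    refine ((le_div_iff₀ (pow_pos hm n)).mpr key).trans_eq ?_
    rw [add_div, pow_succ', mul_div_cancel_right₀ _ (pow_ne_zero n hm.ne'), pow_succ',
      mul_div_assoc, div_pow]
  have hlim : Tendsto (fun n : ℕ => m + s * (s / m) ^ n) atTop (𝓝 m) := by
    have hq := tendsto_pow_atTop_nhds_zero_of_lt_one (div_nonneg (apply_nonneg p _) hm.le)
      ((div_lt_one hm).mpr hw)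
    simpa using tendsto_const_nhds.add (tendsto_const_nhds.mul hq)
  exact ge_of_tendsto' hlim hbound

end AlgClosed

section Complex

variable {B : Type*} [CommRing B] [Algebra ℂ B] (p : MulRingSeminorm B) {ε : ℝ} (hε : 0 < ε)
  (hC : ∀ c : ℂ, p (algebraMap ℂ B c) = ‖c‖ ^ ε)
include hε hC

theorem continuous_map_sub_algebraMap (f : B) :
    Continuous fun c : ℂ => p (f - algebraMap ℂ B c) := by
  refine continuous_iff_continuousAt.mpr fun a => tendsto_iff_dist_tendsto_zero.mpr ?_
  refine squeeze_zero (fun _ => dist_nonneg) (fun c => ?_) (tendsto_norm_sub_rpow_nhds_zero hε a)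
  calc dist (p (f - algebraMap ℂ B c)) (p (f - algebraMap ℂ B a))
      ≤ p ((f - algebraMap ℂ B c) - (f - algebraMap ℂ B a)) := abs_sub_map_le_sub p _ _
    _ = ‖c - a‖ ^ ε := by
      rw [sub_sub_sub_cancel_left, ← (algebraMap ℂ B).map_sub, hC, norm_sub_rev]

theorem tendsto_map_sub_algebraMap_cocompact (f : B) :
    Tendsto (fun c : ℂ => p (f - algebraMap ℂ B c)) (cocompact ℂ) atTop := by
  refine tendsto_atTop_mono (fun c => ?_) (tendsto_atTop_add_const_right _ (-p f)
    ((tendsto_rpow_atTop hε).comp tendsto_norm_cocompact_atTop))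
  have := le_of_abs_le (abs_sub_map_le_sub p (algebraMap ℂ B c) f)
  rw [hC, map_sub_rev] at this
  simp only [Function.comp_apply]
  linarith

theorem isOpen_setOf_map_sub_algebraMap_eq {f : B} {m : ℝ} (hm : 0 < m)
    (hmin : ∀ c, m ≤ p (f - algebraMap ℂ B c)) :
    IsOpen {c : ℂ | p (f - algebraMap ℂ B c) = m} := by
  refine isOpen_iff_mem_nhds.mpr fun a ha => ?_
  filter_upwards [(tendsto_norm_sub_rpow_nhds_zero hε a).eventually (gt_mem_nhds hm)] with c hc
  refine le_antisymm ?_ (hmin c)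
  have hshift (z : ℂ) :
      f - algebraMap ℂ B a - algebraMap ℂ B z = f - algebraMap ℂ B (a + z) := by
    rw [map_add, sub_sub]
  have := map_sub_algebraMap_le_of_forall_le p (x := f - algebraMap ℂ B a) (w := c - a)
    (fun z => by rw [ha, hshift]; exact hmin _) (by rwa [hC, ha])
  rwa [hshift, add_sub_cancel, ha] at this

theorem exists_map_sub_algebraMap_eq_zero (f : B) :
    ∃ c : ℂ, p (f - algebraMap ℂ B c) = 0 := by
  have hcont := continuous_map_sub_algebraMap p hε hC f
  have htop := tendsto_map_sub_algebraMap_cocompact p hε hC f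
  obtain ⟨c₀, hc₀⟩ := hcont.exists_forall_le htop
  refine ⟨c₀, ((apply_nonneg p _).eq_or_lt.resolve_right fun hm => ?_).symm⟩
  have huniv : {c : ℂ | p (f - algebraMap ℂ B c) = p (f - algebraMap ℂ B c₀)} = Set.univ :=
    IsClopen.eq_univ ⟨isClosed_eq hcont continuous_const,
      isOpen_setOf_map_sub_algebraMap_eq p hε hC hm hc₀⟩ ⟨c₀, rfl⟩
  obtain ⟨c, hc⟩ := (htop.eventually_gt_atTop (p (f - algebraMap ℂ B c₀))).exists
  exact hc.ne' (Set.eq_univ_iff_forall.mp huniv c)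

end Complex

end MulRingSeminorm

theorem seminorm_comes_from_character_general (B : Type*) [CommRing B] [Algebra ℂ B]
    (ε : ℝ) (hε0 : 0 < ε)
    (N : B → ℝ) (hN : IsMultSeminorm N)
    (hC : ∀ c : ℂ, N (algebraMap ℂ B c) = ‖c‖ ^ ε) :
    ∃ χ : B →ₐ[ℂ] ℂ, ∀ f : B, N f = ‖χ f‖ ^ ε := by
  set p := hN.toMulRingSeminorm_s15
  obtain ⟨χ, hχ⟩ := p.exists_algHom_map_sub_algebraMap_eq_zero
    (p.exists_map_sub_algebraMap_eq_zero hε0 hC)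
  exact ⟨χ, fun f => (p.eq_of_map_sub_eq_zero (hχ f)).trans (hC _)⟩

/-- A multiplicative seminorm on a commutative unital `ℂ`-algebra restricting
to `|·|^ε` on `ℂ` comes from a `ℂ`-algebra homomorphism `χ : B → ℂ`. -/
theorem seminorm_comes_from_character (B : Type*) [CommRing B] [Algebra ℂ B]
    (ε : ℝ) (hε0 : 0 < ε) (hε1 : ε ≤ 1)
    (N : B → ℝ) (hN : IsMultSeminorm N)
    (hC : ∀ c : ℂ, N (algebraMap ℂ B c) = ‖c‖ ^ ε) :
    ∃ χ : B →ₐ[ℂ] ℂ, ∀ f : B, N f = ‖χ f‖ ^ ε :=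
  seminorm_comes_from_character_general B ε hε0 N hN hC
end
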